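/- arXiv:1312.0889 — 5 statements merged into one kernel-verified Lean document; each statement's English description precedes it below -/
import Mathlib

section
/- Let X be a normed space, T > 0, μ ∈ (0,1] and C ≥ 0. Let f : [0,T] → X satisfy ‖f(t) − f(s)‖ ≤ C·|t−s|^μ for all s,t ∈ [0,T]. Fix α ∈ (0,μ) and define φ : [0,T] → ℝ by φ(0) = 0 and, for t ∈ (0,T], φ(t) = sup_{0 ≤ s < t} ‖f(t) − f(s)‖·(t−s)^{−α}. Then φ is (μ−α)-Hölder continuous on [0,T]: there exists a constant c depending only on μ and α such that |φ(t) − φ(τ)| ≤ c·C·(t−τ)^{μ−α} for all 0 ≤ τ ≤ t ≤ T. -/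
open Set

/-- Lemma A.1 of the paper: if `f : [0,T] → X` is `μ`-Hölder with constant `C` and
`α ∈ (0,μ)`, then the running Hölder-quotient function
`φ(t) = sup_{0 ≤ s < t} ‖f(t) - f(s)‖ / (t-s)^α` (with `φ(0) = 0`) is `(μ-α)`-Hölder on
`[0,T]`, with a constant depending only on `μ` and `α` (times `C`). -/
theorem stmt0 (μ α : ℝ) (hα : 0 < α) (hαμ : α < μ) (hμ : μ ≤ 1) :
    ∃ c : ℝ, 0 ≤ c ∧
      ∀ (X : Type*) [_inst1 : NormedAddCommGroup X] [_inst2 : NormedSpace ℝ X]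
        (T C : ℝ) (f : ℝ → X) (φ : ℝ → ℝ),
        0 < T → 0 ≤ C →
        (∀ s ∈ Icc (0:ℝ) T, ∀ t ∈ Icc (0:ℝ) T, ‖f t - f s‖ ≤ C * |t - s| ^ μ) →
        φ 0 = 0 →
        (∀ t ∈ Ioc (0:ℝ) T,
          φ t = sSup {y : ℝ | ∃ s, 0 ≤ s ∧ s < t ∧ y = ‖f t - f s‖ / (t - s) ^ α}) →
        ∀ τ t : ℝ, 0 ≤ τ → τ ≤ t → t ≤ T → |φ t - φ τ| ≤ c * C * (t - τ) ^ (μ - α) := by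
  refine ⟨2, by norm_num, ?_⟩
  intro X _ _ T C f φ hT hC hf hφ0 hφ
  have hμα : (0:ℝ) < μ - α := by linarith
  -- single term bound
  have key : ∀ s t : ℝ, s ∈ Icc (0:ℝ) T → t ∈ Icc (0:ℝ) T → s < t →
      ‖f t - f s‖ / (t - s) ^ α ≤ C * (t - s) ^ (μ - α) := by
    intro s t hs ht hst
    have hts : (0:ℝ) < t - s := by linarith
    rw [div_le_iff₀ (Real.rpow_pos_of_pos hts α)]
    calc ‖f t - f s‖ ≤ C * |t - s| ^ μ := hf s hs t ht
      _ = C * (t - s) ^ (μ - α) * (t - s) ^ α := by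
          rw [abs_of_pos hts, show μ = (μ - α) + α by ring, Real.rpow_add hts]; ring
  -- properties of the sup set
  have hSbdd : ∀ t ∈ Ioc (0:ℝ) T,
      BddAbove {y : ℝ | ∃ s, 0 ≤ s ∧ s < t ∧ y = ‖f t - f s‖ / (t - s) ^ α} := by
    intro t ht
    refine ⟨C * T ^ (μ - α), ?_⟩
    rintro y ⟨s, hs0, hst, rfl⟩
    have h1 : ‖f t - f s‖ / (t - s) ^ α ≤ C * (t - s) ^ (μ - α) :=
      key s t ⟨hs0, by linarith [ht.2]⟩ ⟨le_of_lt (lt_of_le_of_lt hs0 hst), ht.2⟩ hst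
    refine h1.trans (mul_le_mul_of_nonneg_left ?_ hC)
    exact Real.rpow_le_rpow (by linarith) (by linarith [ht.2]) hμα.le
  have hSne : ∀ t ∈ Ioc (0:ℝ) T,
      (‖f t - f 0‖ / (t - 0) ^ α) ∈
        {y : ℝ | ∃ s, 0 ≤ s ∧ s < t ∧ y = ‖f t - f s‖ / (t - s) ^ α} := by
    intro t ht
    exact ⟨0, le_refl 0, ht.1, rfl⟩
  have hφnn : ∀ t ∈ Ioc (0:ℝ) T, 0 ≤ φ t := by
    intro t ht
    rw [hφ t ht]
    refine le_trans ?_ (le_csSup (hSbdd t ht) (hSne t ht))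
    exact div_nonneg (norm_nonneg _) (Real.rpow_nonneg (by linarith [ht.1]) α)
  -- main estimate
  intro τ t hτ0 hτt htT
  rcases eq_or_lt_of_le hτt with rfl | hlt
  · simp [Real.zero_rpow hμα.ne']
  have htpos : 0 < t := lt_of_le_of_lt hτ0 hlt
  have ht : t ∈ Ioc (0:ℝ) T := ⟨htpos, htT⟩
  set h := t - τ with hh
  have hhpos : 0 < h := by simp [hh]; linarith
  have hhα : (0:ℝ) < h ^ α := Real.rpow_pos_of_pos hhpos α
  have hhμα : (0:ℝ) ≤ h ^ (μ - α) := (Real.rpow_pos_of_pos hhpos _).le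
  have hftτ : ‖f t - f τ‖ ≤ C * h ^ μ := by
    have := hf τ ⟨hτ0, by linarith⟩ t ⟨htpos.le, htT⟩
    rwa [abs_of_pos (by linarith : (0:ℝ) < t - τ)] at this
  rcases eq_or_lt_of_le hτ0 with rfl | hτpos
  · -- τ = 0
    rw [hφ0, sub_zero, abs_of_nonneg (hφnn t ht)]
    rw [hφ t ht]
    refine csSup_le ⟨_, hSne t ht⟩ ?_
    rintro y ⟨s, hs0, hst, rfl⟩
    have h1 := key s t ⟨hs0, by linarith⟩ ⟨htpos.le, htT⟩ hst
    refine h1.trans ?_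
    have h2 : (t - s) ^ (μ - α) ≤ (t - 0) ^ (μ - α) :=
      Real.rpow_le_rpow (by linarith) (by linarith) hμα.le
    nlinarith [Real.rpow_pos_of_pos (show (0:ℝ) < t - 0 by linarith) (μ - α)]
  · -- 0 < τ
    have hτm : τ ∈ Ioc (0:ℝ) T := ⟨hτpos, by linarith⟩
    have hφτnn := hφnn τ hτm
    have hφtnn := hφnn t ht
    rw [abs_sub_le_iff]
    constructor
    · -- φ t - φ τ ≤ 2 C h^{μ-α}
      rw [sub_le_iff_le_add, hφ t ht]
      refine csSup_le ⟨_, hSne t ht⟩ ?_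
      rintro y ⟨s, hs0, hst, rfl⟩
      rcases le_or_gt τ s with hsτ | hsτ
      · -- τ ≤ s < t : short increment
        have h1 := key s t ⟨hs0, by linarith⟩ ⟨htpos.le, htT⟩ hst
        have h2 : (t - s) ^ (μ - α) ≤ h ^ (μ - α) :=
          Real.rpow_le_rpow (by linarith) (by simp [hh]; linarith) hμα.le
        nlinarith
      · -- s < τ
        have hτs : (0:ℝ) < τ - s := by linarith
        have hts : (0:ℝ) < t - s := by linarith
        have htsα : (0:ℝ) < (t - s) ^ α := Real.rpow_pos_of_pos hts α
        have hτsα : (0:ℝ) < (τ - s) ^ α := Real.rpow_pos_of_pos hτs α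
        have hmem : ‖f τ - f s‖ / (τ - s) ^ α ≤ φ τ := by
          rw [hφ τ hτm]
          exact le_csSup (hSbdd τ hτm) ⟨s, hs0, hsτ, rfl⟩
        have h3 : ‖f τ - f s‖ ≤ φ τ * (τ - s) ^ α := by
          rwa [div_le_iff₀ hτsα] at hmem
        have h4 : ‖f t - f s‖ ≤ C * h ^ μ + φ τ * (τ - s) ^ α := by
          calc ‖f t - f s‖ ≤ ‖f t - f τ‖ + ‖f τ - f s‖ := norm_sub_le_norm_sub_add_norm_sub _ _ _
            _ ≤ C * h ^ μ + φ τ * (τ - s) ^ α := add_le_add hftτ h3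
        rw [div_le_iff₀ htsα]
        have hαle : h ^ α ≤ (t - s) ^ α := Real.rpow_le_rpow hhpos.le (by simp [hh]; linarith) hα.le
        have hταle : (τ - s) ^ α ≤ (t - s) ^ α := Real.rpow_le_rpow hτs.le (by linarith) hα.le
        have hμsplit : C * h ^ (μ - α) * h ^ α = C * h ^ μ := by
          rw [mul_assoc, ← Real.rpow_add hhpos]; ring_nf
        have hCμ : (0:ℝ) ≤ C * h ^ μ := by positivity
        -- C h^μ + φτ (τ-s)^α ≤ (φτ + 2 C h^{μ-α}) (t-s)^α
        have e1 : C * h ^ μ ≤ C * h ^ (μ - α) * (t - s) ^ α := by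
          rw [← hμsplit]
          exact mul_le_mul_of_nonneg_left hαle (by positivity)
        have e2 : φ τ * (τ - s) ^ α ≤ φ τ * (t - s) ^ α :=
          mul_le_mul_of_nonneg_left hταle hφτnn
        have e3 : (0:ℝ) ≤ C * h ^ (μ - α) * (t - s) ^ α := by positivity
        nlinarith
    · -- φ τ - φ t ≤ 2 C h^{μ-α}
      rw [sub_le_iff_le_add, hφ τ hτm]
      refine csSup_le ⟨_, hSne τ hτm⟩ ?_
      rintro y ⟨s, hs0, hsτ, rfl⟩
      have hτs : (0:ℝ) < τ - s := by linarith
      have hτsα : (0:ℝ) < (τ - s) ^ α := Real.rpow_pos_of_pos hτs α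
      rcases le_or_gt (τ - s) h with hcase | hcase
      · -- short increment
        have h1 := key s τ ⟨hs0, by linarith⟩ ⟨hτpos.le, by linarith⟩ hsτ
        have h2 : (τ - s) ^ (μ - α) ≤ h ^ (μ - α) :=
          Real.rpow_le_rpow hτs.le hcase hμα.le
        nlinarith
      · -- long increment: shift s to s + h
        have hs' : s + h < t := by simp [hh]; linarith
        have hs'0 : 0 ≤ s + h := by linarith
        have hts' : t - (s + h) = τ - s := by simp [hh]; ring
        have hmem : ‖f t - f (s + h)‖ / (t - (s + h)) ^ α ≤ φ t := by
          rw [hφ t ht]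
          exact le_csSup (hSbdd t ht) ⟨s + h, hs'0, hs', rfl⟩
        rw [hts'] at hmem
        have h3 : ‖f t - f (s + h)‖ ≤ φ t * (τ - s) ^ α := by
          rwa [div_le_iff₀ hτsα] at hmem
        have hfss' : ‖f (s + h) - f s‖ ≤ C * h ^ μ := by
          have := hf s ⟨hs0, by linarith⟩ (s + h) ⟨hs'0, by linarith⟩
          rwa [show s + h - s = h by ring, abs_of_pos hhpos] at this
        have h4 : ‖f τ - f s‖ ≤ φ t * (τ - s) ^ α + 2 * (C * h ^ μ) := by
          have tri : ‖f τ - f s‖ ≤ ‖f τ - f t‖ + ‖f t - f (s + h)‖ + ‖f (s + h) - f s‖ := by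
            calc ‖f τ - f s‖ ≤ ‖f τ - f (s+h)‖ + ‖f (s+h) - f s‖ :=
                  norm_sub_le_norm_sub_add_norm_sub _ _ _
              _ ≤ ‖f τ - f t‖ + ‖f t - f (s+h)‖ + ‖f (s+h) - f s‖ := by
                  have := norm_sub_le_norm_sub_add_norm_sub (f τ) (f t) (f (s+h))
                  linarith
          have hτt' : ‖f τ - f t‖ ≤ C * h ^ μ := by rwa [norm_sub_rev] at hftτ
          linarith
        rw [div_le_iff₀ hτsα]
        have hαle : h ^ α ≤ (τ - s) ^ α := Real.rpow_le_rpow hhpos.le hcase.le hα.le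
        have hμsplit : C * h ^ (μ - α) * h ^ α = C * h ^ μ := by
          rw [mul_assoc, ← Real.rpow_add hhpos]; ring_nf
        have e1 : C * h ^ μ ≤ C * h ^ (μ - α) * (τ - s) ^ α := by
          rw [← hμsplit]
          exact mul_le_mul_of_nonneg_left hαle (by positivity)
        calc ‖f τ - f s‖ ≤ φ t * (τ - s) ^ α + 2 * (C * h ^ μ) := h4
          _ ≤ φ t * (τ - s) ^ α + 2 * (C * h ^ (μ - α) * (τ - s) ^ α) := by linarith
          _ = (2 * C * h ^ (μ - α) + φ t) * (τ - s) ^ α := by ring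
end

section
/- Let 0 < ε < μ ≤ 1 be real numbers. Then for all real numbers 0 ≤ s < τ < t one has (τ−s)^μ·((τ−s)^{ε−μ} − (t−s)^{ε−μ}) ≤ (t−τ)^ε. -/
/-- Key inequality (A.2) in the proof of Lemma A.1: for `0 < ε < μ ≤ 1` and real numbers
`0 ≤ s < τ < t` one has `(τ-s)^μ ((τ-s)^{ε-μ} - (t-s)^{ε-μ}) ≤ (t-τ)^ε`,
where all powers are real powers. -/
theorem stmt1 (ε μ : ℝ) (hε : 0 < ε) (hεμ : ε < μ) (hμ : μ ≤ 1)
    (s τ t : ℝ) (hs : 0 ≤ s) (hsτ : s < τ) (hτt : τ < t) :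
    (τ - s) ^ μ * ((τ - s) ^ (ε - μ) - (t - s) ^ (ε - μ)) ≤ (t - τ) ^ ε := by
  set a := τ - s with ha'
  set b := t - s with hb'
  have ha : 0 < a := by simp [ha']; linarith
  have hb : 0 < b := by simp [hb']; linarith
  have hab : a < b := by simp [ha', hb']; linarith
  have hba : b - a = t - τ := by simp [ha', hb']
  rw [← hba]
  have hbapos : 0 < b - a := by linarith
  have e1 : a ^ μ * (a ^ (ε - μ) - b ^ (ε - μ)) = a ^ ε - a ^ μ * b ^ (ε - μ) := by
    rw [mul_sub, ← Real.rpow_add ha]; ring_nf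
  rw [e1]
  -- Step 1 : a * b^(ε-1) ≤ a^μ * b^(ε-μ)
  have key1 : a * b ^ (ε - 1) ≤ a ^ μ * b ^ (ε - μ) := by
    have hx : (0:ℝ) < a / b := div_pos ha hb
    have hx1 : a / b ≤ 1 := by
      rw [div_le_one hb]; exact hab.le
    have h1 : (a / b) ^ (1:ℝ) ≤ (a / b) ^ μ :=
      Real.rpow_le_rpow_of_exponent_ge hx hx1 hμ
    rw [Real.rpow_one, Real.div_rpow ha.le hb.le] at h1
    have h2 : b ^ ε > 0 := Real.rpow_pos_of_pos hb ε
    have := mul_le_mul_of_nonneg_right h1 h2.le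
    calc a * b ^ (ε - 1) = a / b * b ^ ε := by
          rw [div_mul_eq_mul_div, mul_div_assoc, ← Real.rpow_sub_one hb.ne']
      _ ≤ a ^ μ / b ^ μ * b ^ ε := this
      _ = a ^ μ * b ^ (ε - μ) := by
          rw [div_mul_eq_mul_div, mul_div_assoc, ← Real.rpow_sub hb]
  -- Step 2 : a^ε ≤ b^ε
  have key2 : a ^ ε ≤ b ^ ε := Real.rpow_le_rpow ha.le hab.le hε.le
  -- Step 3 : b^ε - a*b^(ε-1) = (b-a)*b^(ε-1) ≤ (b-a)^ε
  have key3 : (b - a) * b ^ (ε - 1) ≤ (b - a) ^ ε := by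
    have h3 : b ^ (ε - 1) ≤ (b - a) ^ (ε - 1) :=
      Real.rpow_le_rpow_of_nonpos hbapos (by linarith) (by linarith)
    calc (b - a) * b ^ (ε - 1) ≤ (b - a) * (b - a) ^ (ε - 1) :=
          mul_le_mul_of_nonneg_left h3 hbapos.le
      _ = (b - a) ^ ε := by
          rw [← Real.rpow_one_add' (by positivity) (by intro h; linarith)]
          ring_nf
  calc a ^ ε - a ^ μ * b ^ (ε - μ) ≤ b ^ ε - a * b ^ (ε - 1) := by linarith
    _ = (b - a) * b ^ (ε - 1) := by
        have hb1 : b * b ^ (ε - 1) = b ^ ε := by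
          rw [← Real.rpow_one_add' hb.le (by intro h; linarith)]; ring_nf
        linear_combination -hb1
    _ ≤ (b - a) ^ ε := key3
end

section
/- Let 0 < ε < μ ≤ 1 be real numbers. Then for every x ∈ [0,1] one has x^ε − x^μ ≤ (1−x)^ε. -/
lemma real_rpow_add_le_add_rpow {a b p : ℝ} (ha : 0 ≤ a) (hb : 0 ≤ b)
    (hp : 0 ≤ p) (hp1 : p ≤ 1) : (a + b) ^ p ≤ a ^ p + b ^ p := by
  lift a to NNReal using ha
  lift b to NNReal using hb
  have h := NNReal.rpow_add_le_add_rpow a b hp hp1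
  push_cast [← NNReal.coe_rpow] at *
  exact_mod_cast h

lemma one_sub_rpow_le {x p : ℝ} (hx0 : 0 ≤ x) (hx1 : x ≤ 1)
    (hp : 0 ≤ p) (hp1 : p ≤ 1) : 1 - x ^ p ≤ (1 - x) ^ p := by
  have h := real_rpow_add_le_add_rpow hx0 (by linarith : (0:ℝ) ≤ 1 - x) hp hp1
  rw [add_sub_cancel, Real.one_rpow] at h
  linarith

/-- For real numbers `0 < ε < μ ≤ 1` and every `x ∈ [0,1]` one has
`x^ε - x^μ ≤ (1-x)^ε`, with real powers. -/
theorem stmt2 (ε μ : ℝ) (hε : 0 < ε) (hεμ : ε < μ) (hμ : μ ≤ 1)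
    (x : ℝ) (hx : x ∈ Set.Icc (0:ℝ) 1) :
    x ^ ε - x ^ μ ≤ (1 - x) ^ ε := by
  obtain ⟨hx0, hx1⟩ := hx
  rcases eq_or_lt_of_le hx0 with rfl | hx0'
  · rw [Real.zero_rpow hε.ne', Real.zero_rpow (by linarith : μ ≠ 0)]
    norm_num
  rcases le_or_gt (μ - ε) ε with hcase | hcase
  · -- x^ε ≤ x^(μ-ε), so x^ε - x^μ ≤ x^(μ-ε)(1 - x^ε) ≤ 1 - x^ε ≤ (1-x)^ε
    have h1 : x ^ ε ≤ x ^ (μ - ε) :=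
      Real.rpow_le_rpow_of_exponent_ge hx0' hx1 hcase
    have h2 : x ^ (μ - ε) * x ^ ε = x ^ μ := by
      rw [← Real.rpow_add hx0']; ring_nf
    have h3 : x ^ (μ - ε) ≤ 1 := Real.rpow_le_one hx0 hx1 (by linarith)
    have h4 : (0:ℝ) ≤ x ^ ε := Real.rpow_nonneg hx0 _
    have h5 : 1 - x ^ ε ≤ (1 - x) ^ ε :=
      one_sub_rpow_le hx0 hx1 hε.le (by linarith)
    nlinarith [Real.rpow_nonneg hx0 (μ - ε)]
  · -- x^ε - x^μ = x^ε (1 - x^(μ-ε)) ≤ 1 - x^(μ-ε) ≤ (1-x)^(μ-ε) ≤ (1-x)^ε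
    have h2 : x ^ ε * x ^ (μ - ε) = x ^ μ := by
      rw [← Real.rpow_add hx0']; ring_nf
    have h3 : x ^ ε ≤ 1 := Real.rpow_le_one hx0 hx1 hε.le
    have h4 : x ^ (μ - ε) ≤ 1 := Real.rpow_le_one hx0 hx1 (by linarith)
    have h5 : 1 - x ^ (μ - ε) ≤ (1 - x) ^ (μ - ε) :=
      one_sub_rpow_le hx0 hx1 (by linarith) (by linarith)
    have h6 : (1 - x) ^ (μ - ε) ≤ (1 - x) ^ ε := by
      rcases eq_or_lt_of_le hx1 with rfl | hx1'
      · simp [Real.zero_rpow (by linarith : μ - ε ≠ 0), Real.zero_rpow hε.ne']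
      · exact Real.rpow_le_rpow_of_exponent_ge (by linarith) (by linarith) hcase.le
    nlinarith [Real.rpow_nonneg hx0 ε, Real.rpow_nonneg hx0 (μ - ε)]
end

section
/- Let E be a Banach space, T > 0, and let A : [0,T] → 𝓛(E) be continuous in the operator norm. Let S(t,s) ∈ 𝓛(E) be defined for 0 ≤ s ≤ t ≤ T with the following properties: (s,t) ↦ S(t,s) is continuous in the operator norm; S(t,t) = I for all t; for every fixed s, the map t ↦ S(t,s) is differentiable on [s,T] with derivative A(t)∘S(t,s); and for every fixed t, the map s ↦ S(t,s) is differentiable on [0,t] with derivative −S(t,s)∘A(s). Let g : [0,T] → E be continuous and define U : [0,T] → E by U(t) = −∫₀ᵗ S(t,s)A(s)(g(t) − g(s)) ds + S(t,0)g(t). Then U is continuous and, for every t ∈ [0,T], U(t) = ∫₀ᵗ A(s)U(s) ds + g(t). -/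
/-!
Since `∂ₛ S(t,s) = -S(t,s)A(s)`, we have `∫₀ᵗ S(t,s)A(s)x ds = S(t,0)x - x`, so the mild formula
reads `U = g + v` with `v(t) = ∫₀ᵗ S(t,s)A(s)g(s) ds`, which is continuous. Exchanging the order
of integration over the triangle `0 ≤ r ≤ s ≤ t` and using `∂ₛ S(s,r) = A(s)S(s,r)` gives
`∫₀ᵗ A(s)v(s) ds = v(t) - ∫₀ᵗ A(s)g(s) ds`, which is the integral equation for `U = g + v`.
-/

open Set MeasureTheory Function

lemma integral_eq_sub_of_hasDerivWithinAt_Icc {E : Type*} [NormedAddCommGroup E]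
    [NormedSpace ℝ E] [CompleteSpace E] {f f' : ℝ → E} {a b : ℝ} (hab : a ≤ b)
    (hderiv : ∀ x ∈ Icc a b, HasDerivWithinAt f (f' x) (Icc a b) x)
    (hcont : ContinuousOn f' (Icc a b)) :
    ∫ x in a..b, f' x = f b - f a :=
  intervalIntegral.integral_eq_sub_of_hasDeriv_right_of_le hab
    (fun x hx => (hderiv x hx).continuousWithinAt)
    (fun x hx => (hderiv x (Ioo_subset_Icc_self hx)).mono_of_mem_nhdsWithin
      (Icc_mem_nhdsGT_of_mem ⟨hx.1.le, hx.2⟩))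
    (hcont.intervalIntegrable_of_Icc hab)

section Triangle

variable {X : Type*} [TopologicalSpace X] {E : Type*} [NormedAddCommGroup E] [NormedSpace ℝ E]

def triangle (a b : ℝ) : Set (ℝ × ℝ) := {q | a ≤ q.2 ∧ q.2 ≤ q.1 ∧ q.1 ≤ b}

lemma isCompact_triangle (a b : ℝ) : IsCompact (triangle a b) := by
  refine ((isCompact_Icc (a := a) (b := b)).prod (isCompact_Icc (a := a) (b := b)))
    |>.of_isClosed_subset ?_ ?_
  · exact (isClosed_le continuous_const continuous_snd).inter
      ((isClosed_le continuous_snd continuous_fst).inter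
        (isClosed_le continuous_fst continuous_const))
  · exact fun q ⟨h₁, h₂, h₃⟩ => ⟨⟨h₁.trans h₂, h₃⟩, h₁, h₂.trans h₃⟩

lemma mapsTo_fst_triangle (a b : ℝ) : MapsTo Prod.fst (triangle a b) (Icc a b) :=
  fun _ ⟨h₁, h₂, h₃⟩ => ⟨h₁.trans h₂, h₃⟩

lemma mapsTo_snd_triangle (a b : ℝ) : MapsTo Prod.snd (triangle a b) (Icc a b) :=
  fun _ ⟨h₁, h₂, h₃⟩ => ⟨h₁, h₂.trans h₃⟩

lemma triangle_subset_triangle {a b c : ℝ} (h : b ≤ c) : triangle a b ⊆ triangle a c :=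
  fun _ ⟨h₁, h₂, h₃⟩ => ⟨h₁, h₂, h₃.trans h⟩

lemma ContinuousOn.uncurry_left_triangle {a b : ℝ} {F : ℝ → ℝ → X}
    (hF : ContinuousOn (uncurry F) (triangle a b)) {t : ℝ} (ht : t ≤ b) :
    ContinuousOn (F t) (Icc a t) :=
  hF.comp (Continuous.continuousOn (by fun_prop : Continuous fun s : ℝ => (t, s)))
    fun _ hs => ⟨hs.1, hs.2, ht⟩

lemma ContinuousOn.uncurry_right_triangle {a b : ℝ} {F : ℝ → ℝ → X}
    (hF : ContinuousOn (uncurry F) (triangle a b)) {r : ℝ} (hr : a ≤ r) :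
    ContinuousOn (F · r) (Icc r b) :=
  hF.comp (Continuous.continuousOn (by fun_prop : Continuous fun s : ℝ => (s, r)))
    fun _ hs => ⟨hr, hs.1, hs.2⟩

/-- The triangle is a retract of the plane: clamp `s` to `[a, b]`, then `t` to `[s, b]`. -/
lemma ContinuousOn.exists_continuous_eqOn_triangle {a b : ℝ} (hab : a ≤ b) {F : ℝ × ℝ → X}
    (hF : ContinuousOn F (triangle a b)) :
    ∃ G : ℝ × ℝ → X, Continuous G ∧ EqOn G F (triangle a b) := by
  set ρ : ℝ × ℝ → ℝ × ℝ := fun q =>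
    (max (max a (min q.2 b)) (min q.1 b), max a (min q.2 b)) with hρ
  have hρ_cont : Continuous ρ := by fun_prop
  have hρ_mem : ∀ q, ρ q ∈ triangle a b := fun q =>
    ⟨le_max_left _ _, le_max_left _ _, max_le (max_le hab (min_le_right _ _)) (min_le_right _ _)⟩
  refine ⟨F ∘ ρ, hF.comp_continuous hρ_cont hρ_mem, fun q ⟨h₁, h₂, h₃⟩ => ?_⟩
  have hs : max a (min q.2 b) = q.2 := by
    rw [min_eq_left (h₂.trans h₃), max_eq_right h₁]
  simp only [comp_apply, hρ, hs, min_eq_left h₃, max_eq_right h₂]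

lemma continuousOn_intervalIntegral_of_continuousOn_triangle {a b : ℝ} (hab : a ≤ b)
    {F : ℝ → ℝ → E} (hF : ContinuousOn (uncurry F) (triangle a b)) :
    ContinuousOn (fun t => ∫ s in a..t, F t s) (Icc a b) := by
  obtain ⟨G, hG, hGF⟩ := hF.exists_continuous_eqOn_triangle hab
  have hGint := intervalIntegral.continuous_parametric_intervalIntegral_of_continuous
    (μ := volume) (a₀ := a) (f := fun t s => G (t, s)) hG continuous_id
  refine hGint.continuousOn.congr fun t ht => ?_
  refine intervalIntegral.integral_congr fun s hs => (hGF (x := (t, s)) ?_).symm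
  rw [uIcc_of_le ht.1] at hs
  exact ⟨hs.1, hs.2, ht.2⟩

lemma integral_integral_swap_triangle [CompleteSpace E] {a b : ℝ} (hab : a ≤ b)
    {F : ℝ → ℝ → E} (hF : ContinuousOn (uncurry F) (triangle a b)) :
    ∫ s in a..b, ∫ r in a..s, F s r = ∫ r in a..b, ∫ s in r..b, F s r := by
  set D : Set (ℝ × ℝ) := {p | p.2 < p.1}
  have hD : MeasurableSet D := measurableSet_lt measurable_snd measurable_fst
  set μ := volume.restrict (Ioc a b)
  have hint : Integrable (D.indicator (uncurry F)) (μ.prod μ) := by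
    rw [integrable_indicator_iff hD, Measure.prod_restrict, IntegrableOn,
      Measure.restrict_restrict hD, ← Measure.volume_eq_prod]
    exact (hF.integrableOn_compact (isCompact_triangle a b)).mono_set
      fun q ⟨hq, ⟨_, h₁⟩, h₂, _⟩ => ⟨h₂.le, hq.le, h₁⟩
  have hleft : ∀ s ∈ Ioc a b,
      ∫ r, D.indicator (uncurry F) (s, r) ∂μ = ∫ r in a..s, F s r := by
    intro s hs
    have hind : (fun r => D.indicator (uncurry F) (s, r)) = (Iio s).indicator (F s) := by
      ext r; by_cases h : r < s <;> simp [D, h]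
    have hset : Iio s ∩ Ioc a b = Ioo a s := by
      ext r; simp only [mem_inter_iff, mem_Iio, mem_Ioc, mem_Ioo]
      exact ⟨fun h => ⟨h.2.1, h.1⟩, fun h => ⟨h.2, h.1, h.2.le.trans hs.2⟩⟩
    rw [hind, integral_indicator measurableSet_Iio, Measure.restrict_restrict measurableSet_Iio,
      hset, intervalIntegral.integral_of_le hs.1.le, integral_Ioc_eq_integral_Ioo]
  have hright : ∀ r ∈ Ioc a b,
      ∫ s, D.indicator (uncurry F) (s, r) ∂μ = ∫ s in r..b, F s r := by
    intro r hr
    have hind : (fun s => D.indicator (uncurry F) (s, r)) = (Ioi r).indicator (F · r) := by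
      ext s; by_cases h : r < s <;> simp [D, h]
    have hset : Ioi r ∩ Ioc a b = Ioc r b := by
      ext s; simp only [mem_inter_iff, mem_Ioi, mem_Ioc]
      exact ⟨fun h => ⟨h.1, h.2.2⟩, fun h => ⟨h.1, hr.1.trans h.1, h.2⟩⟩
    rw [hind, integral_indicator measurableSet_Ioi, Measure.restrict_restrict measurableSet_Ioi,
      hset, intervalIntegral.integral_of_le hr.2]
  calc ∫ s in a..b, ∫ r in a..s, F s r
      = ∫ s, ∫ r, D.indicator (uncurry F) (s, r) ∂μ ∂μ := by
        rw [intervalIntegral.integral_of_le hab]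
        exact (setIntegral_congr_fun measurableSet_Ioc hleft).symm
    _ = ∫ r, ∫ s, D.indicator (uncurry F) (s, r) ∂μ ∂μ := integral_integral_swap hint
    _ = ∫ r in a..b, ∫ s in r..b, F s r := by
        rw [intervalIntegral.integral_of_le hab]
        exact setIntegral_congr_fun measurableSet_Ioc hright

end Triangle

section EvolutionFamily

variable {E : Type*} [NormedAddCommGroup E] [NormedSpace ℝ E]
  {T : ℝ} {A : ℝ → E →L[ℝ] E} {S : ℝ → ℝ → E →L[ℝ] E}

noncomputable def evolutionConv (S : ℝ → ℝ → E →L[ℝ] E) (A : ℝ → E →L[ℝ] E) (g : ℝ → E)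
    (t : ℝ) : E :=
  ∫ s in 0..t, S t s (A s (g s))

noncomputable def mildSolution (S : ℝ → ℝ → E →L[ℝ] E) (A : ℝ → E →L[ℝ] E) (g : ℝ → E)
    (t : ℝ) : E :=
  -(∫ s in Ioo 0 t, S t s (A s (g t - g s))) + S t 0 (g t)

variable {g : ℝ → E}

lemma continuousOn_evolutionConv_integrand (hA : ContinuousOn A (Icc 0 T))
    (hS : ContinuousOn (uncurry S) (triangle 0 T)) (hg : ContinuousOn g (Icc 0 T)) :
    ContinuousOn (uncurry fun t s => S t s (A s (g s))) (triangle 0 T) :=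
  hS.clm_apply ((hA.comp continuous_snd.continuousOn (mapsTo_snd_triangle 0 T)).clm_apply
    (hg.comp continuous_snd.continuousOn (mapsTo_snd_triangle 0 T)))

lemma continuousOn_evolutionConv (hT : 0 ≤ T) (hA : ContinuousOn A (Icc 0 T))
    (hS : ContinuousOn (uncurry S) (triangle 0 T)) (hg : ContinuousOn g (Icc 0 T)) :
    ContinuousOn (evolutionConv S A g) (Icc 0 T) :=
  continuousOn_intervalIntegral_of_continuousOn_triangle hT
    (continuousOn_evolutionConv_integrand hA hS hg)

variable [CompleteSpace E]

lemma integral_evolution_generator_apply (hA : ContinuousOn A (Icc 0 T))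
    (hS : ContinuousOn (uncurry S) (triangle 0 T))
    (hSid : ∀ t ∈ Icc (0:ℝ) T, S t t = ContinuousLinearMap.id ℝ E)
    (hSderiv_s : ∀ t ∈ Icc (0:ℝ) T, ∀ s ∈ Icc (0:ℝ) t,
      HasDerivWithinAt (fun r => S t r) (-(S t s).comp (A s)) (Icc 0 t) s)
    {t : ℝ} (ht : t ∈ Icc 0 T) (x : E) :
    ∫ s in 0..t, S t s (A s x) = S t 0 x - x := by
  have hderiv : ∀ s ∈ Icc 0 t,
      HasDerivWithinAt (fun r => S t r x) (-S t s (A s x)) (Icc 0 t) s := fun s hs => by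
    simpa using (hSderiv_s t ht s hs).clm_apply (hasDerivWithinAt_const s (Icc 0 t) x)
  have hcont : ContinuousOn (fun s => -S t s (A s x)) (Icc 0 t) :=
    ((hS.uncurry_left_triangle ht.2).clm_apply
      ((hA.mono (Icc_subset_Icc_right ht.2)).clm_apply continuousOn_const)).neg
  have := integral_eq_sub_of_hasDerivWithinAt_Icc ht.1 hderiv hcont
  rw [intervalIntegral.integral_neg, hSid t ht, ContinuousLinearMap.id_apply] at this
  rw [← neg_sub, ← this, neg_neg]

lemma integral_generator_evolution_apply (hA : ContinuousOn A (Icc 0 T))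
    (hS : ContinuousOn (uncurry S) (triangle 0 T))
    (hSid : ∀ t ∈ Icc (0:ℝ) T, S t t = ContinuousLinearMap.id ℝ E)
    (hSderiv_t : ∀ s ∈ Icc (0:ℝ) T, ∀ t ∈ Icc s T,
      HasDerivWithinAt (fun r => S r s) ((A t).comp (S t s)) (Icc s T) t)
    {r t : ℝ} (hr : 0 ≤ r) (hrt : r ≤ t) (ht : t ≤ T) (y : E) :
    ∫ s in r..t, A s (S s r y) = S t r y - y := by
  have hrT : r ∈ Icc 0 T := ⟨hr, hrt.trans ht⟩
  have hderiv : ∀ s ∈ Icc r t,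
      HasDerivWithinAt (fun q => S q r y) (A s (S s r y)) (Icc r t) s := fun s hs => by
    simpa using ((hSderiv_t r hrT s ⟨hs.1, hs.2.trans ht⟩).mono
      (Icc_subset_Icc_right ht)).clm_apply (hasDerivWithinAt_const s (Icc r t) y)
  have hcont : ContinuousOn (fun s => A s (S s r y)) (Icc r t) :=
    (hA.mono (Icc_subset_Icc hr ht)).clm_apply
      (((hS.uncurry_right_triangle hr).mono (Icc_subset_Icc_right ht)).clm_apply
        continuousOn_const)
  rw [integral_eq_sub_of_hasDerivWithinAt_Icc hrt hderiv hcont, hSid r hrT,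
    ContinuousLinearMap.id_apply]

lemma mildSolution_eq_add_evolutionConv (hA : ContinuousOn A (Icc 0 T))
    (hS : ContinuousOn (uncurry S) (triangle 0 T))
    (hSid : ∀ t ∈ Icc (0:ℝ) T, S t t = ContinuousLinearMap.id ℝ E)
    (hSderiv_s : ∀ t ∈ Icc (0:ℝ) T, ∀ s ∈ Icc (0:ℝ) t,
      HasDerivWithinAt (fun r => S t r) (-(S t s).comp (A s)) (Icc 0 t) s)
    (hg : ContinuousOn g (Icc 0 T)) {t : ℝ} (ht : t ∈ Icc 0 T) :
    mildSolution S A g t = g t + evolutionConv S A g t := by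
  have hint : ∀ f : ℝ → E, ContinuousOn f (Icc 0 t) →
      IntervalIntegrable (fun s => S t s (A s (f s))) volume 0 t := fun f hf =>
    ((hS.uncurry_left_triangle ht.2).clm_apply
      ((hA.mono (Icc_subset_Icc_right ht.2)).clm_apply hf)).intervalIntegrable_of_Icc ht.1
  have hsplit : ∫ s in Ioo 0 t, S t s (A s (g t - g s))
      = (∫ s in 0..t, S t s (A s (g t))) - ∫ s in 0..t, S t s (A s (g s)) := by
    rw [← integral_Ioc_eq_integral_Ioo, ← intervalIntegral.integral_of_le ht.1,
      ← intervalIntegral.integral_sub (hint _ continuousOn_const)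
        (hint g (hg.mono (Icc_subset_Icc_right ht.2)))]
    simp only [map_sub]
  rw [mildSolution, hsplit, integral_evolution_generator_apply hA hS hSid hSderiv_s ht,
    evolutionConv]
  abel

lemma integral_generator_evolutionConv (hA : ContinuousOn A (Icc 0 T))
    (hS : ContinuousOn (uncurry S) (triangle 0 T))
    (hSid : ∀ t ∈ Icc (0:ℝ) T, S t t = ContinuousLinearMap.id ℝ E)
    (hSderiv_t : ∀ s ∈ Icc (0:ℝ) T, ∀ t ∈ Icc s T,
      HasDerivWithinAt (fun r => S r s) ((A t).comp (S t s)) (Icc s T) t)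
    (hg : ContinuousOn g (Icc 0 T)) {t : ℝ} (ht : t ∈ Icc 0 T) :
    ∫ s in 0..t, A s (evolutionConv S A g s)
      = evolutionConv S A g t - ∫ s in 0..t, A s (g s) := by
  have hSAg := continuousOn_evolutionConv_integrand hA hS hg
  have hF : ContinuousOn (uncurry fun s r => A s (S s r (A r (g r)))) (triangle 0 t) :=
    ((hA.comp continuous_fst.continuousOn (mapsTo_fst_triangle 0 T)).clm_apply hSAg).mono
      (triangle_subset_triangle ht.2)
  have hAg : ContinuousOn (fun s => A s (g s)) (Icc 0 t) :=
    (hA.clm_apply hg).mono (Icc_subset_Icc_right ht.2)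
  calc ∫ s in 0..t, A s (evolutionConv S A g s)
      = ∫ s in 0..t, ∫ r in 0..s, A s (S s r (A r (g r))) := by
        refine intervalIntegral.integral_congr fun s hs => ?_
        rw [uIcc_of_le ht.1] at hs
        exact ((A s).intervalIntegral_comp_comm
          ((hSAg.uncurry_left_triangle (hs.2.trans ht.2)).intervalIntegrable_of_Icc hs.1)).symm
    _ = ∫ r in 0..t, ∫ s in r..t, A s (S s r (A r (g r))) :=
        integral_integral_swap_triangle ht.1 hF
    _ = ∫ r in 0..t, (S t r (A r (g r)) - A r (g r)) := by
        refine intervalIntegral.integral_congr fun r hr => ?_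
        rw [uIcc_of_le ht.1] at hr
        exact integral_generator_evolution_apply hA hS hSid hSderiv_t hr.1 hr.2 ht.2 _
    _ = evolutionConv S A g t - ∫ s in 0..t, A s (g s) :=
        intervalIntegral.integral_sub
          ((hSAg.uncurry_left_triangle ht.2).intervalIntegrable_of_Icc ht.1)
          (hAg.intervalIntegrable_of_Icc ht.1)

end EvolutionFamily

/-- Proposition 4.1 of the paper (deterministic, pathwise form): if `A : [0,T] → 𝓛(E)` is
norm-continuous, `S(t,s)` is the evolution family it generates (continuous on the triangle,
`S(t,t) = I`, `∂ₜ S(t,s) = A(t)S(t,s)`, `∂ₛ S(t,s) = -S(t,s)A(s)`), `g : [0,T] → E` is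
continuous and `U(t) = -∫₀ᵗ S(t,s)A(s)(g(t)-g(s)) ds + S(t,0)g(t)`, then `U` is continuous
and satisfies `U(t) = ∫₀ᵗ A(s)U(s) ds + g(t)` for every `t ∈ [0,T]`. -/
theorem stmt7 {E : Type*} [NormedAddCommGroup E] [NormedSpace ℝ E] [CompleteSpace E]
    (T : ℝ) (hT : 0 < T) (A : ℝ → E →L[ℝ] E) (hA : ContinuousOn A (Icc 0 T))
    (S : ℝ → ℝ → E →L[ℝ] E)
    (hScont : ContinuousOn (fun q : ℝ × ℝ => S q.1 q.2)
      {q : ℝ × ℝ | 0 ≤ q.2 ∧ q.2 ≤ q.1 ∧ q.1 ≤ T})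
    (hSid : ∀ t ∈ Icc (0:ℝ) T, S t t = ContinuousLinearMap.id ℝ E)
    (hSderiv_t : ∀ s ∈ Icc (0:ℝ) T, ∀ t ∈ Icc s T,
      HasDerivWithinAt (fun r => S r s) ((A t).comp (S t s)) (Icc s T) t)
    (hSderiv_s : ∀ t ∈ Icc (0:ℝ) T, ∀ s ∈ Icc (0:ℝ) t,
      HasDerivWithinAt (fun r => S t r) (-(S t s).comp (A s)) (Icc 0 t) s)
    (g : ℝ → E) (hg : ContinuousOn g (Icc 0 T))
    (U : ℝ → E)
    (hU : ∀ t ∈ Icc (0:ℝ) T,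
      U t = -(∫ s in Ioo (0:ℝ) t, (S t s) ((A s) (g t - g s))) + (S t 0) (g t)) :
    ContinuousOn U (Icc 0 T) ∧
      ∀ t ∈ Icc (0:ℝ) T, U t = (∫ s in Ioo (0:ℝ) t, (A s) (U s)) + g t := by
  set v := evolutionConv S A g
  have hv : ContinuousOn v (Icc 0 T) := continuousOn_evolutionConv hT.le hA hScont hg
  have hUv : EqOn U (g + v) (Icc 0 T) := fun t ht =>
    (hU t ht).trans (mildSolution_eq_add_evolutionConv hA hScont hSid hSderiv_s hg ht)
  refine ⟨(hg.add hv).congr hUv, fun t ht => ?_⟩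
  have htT : Icc 0 t ⊆ Icc 0 T := Icc_subset_Icc_right ht.2
  have hAU : ∫ s in 0..t, A s (U s) = ∫ s in 0..t, (A s (g s) + A s (v s)) := by
    refine intervalIntegral.integral_congr fun s hs => ?_
    rw [uIcc_of_le ht.1] at hs
    rw [hUv (htT hs), Pi.add_apply, map_add]
  rw [← integral_Ioc_eq_integral_Ioo, ← intervalIntegral.integral_of_le ht.1, hAU,
    intervalIntegral.integral_add (((hA.clm_apply hg).mono htT).intervalIntegrable_of_Icc ht.1)
      (((hA.clm_apply hv).mono htT).intervalIntegrable_of_Icc ht.1),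
    integral_generator_evolutionConv hA hScont hSid hSderiv_t hg ht, hUv ht, Pi.add_apply]
  abel
end

section
/- Let E₀ and E₁ be complex Banach spaces and let ι : E₁ → E₀ be a continuous linear injection. Let T > 0, μ ∈ (0,1], C ≥ 0, K ≥ 0 and M ≥ 0. For each t ∈ [0,T] let A(t) ∈ 𝓛(E₁,E₀) be bijective with ‖A(t)⁻¹‖_{𝓛(E₀,E₁)} ≤ K, and suppose ‖A(t) − A(s)‖_{𝓛(E₁,E₀)} ≤ C|t−s|^μ for all s,t ∈ [0,T]. Let λ ∈ ℂ and t ∈ [0,T] be such that λι − A(t) : E₁ → E₀ is bijective with inverse R ∈ 𝓛(E₀,E₁) satisfying ‖ι∘R‖_{𝓛(E₀)} ≤ M/(|λ|+1). Then for every s ∈ [0,T], |λ| · ‖A(t)∘R∘ι∘(A(t)⁻¹ − A(s)⁻¹)‖_{𝓛(E₀)} ≤ M·C·K·|t−s|^μ. -/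
open Set

/-- Example 2.1 of the paper (Kato–Tanabe situation): suppose the operators
`A(t) : E₁ → E₀` are bijective with inverses `B(t) = A(t)⁻¹` bounded by `K`, and
`t ↦ A(t)` is `μ`-Hölder with constant `C` in `𝓛(E₁,E₀)`.  If `λ ι - A(t)` is invertible
with inverse `R` satisfying the sectoriality bound `‖ι ∘ R‖ ≤ M/(|λ|+1)`, then for all
`s ∈ [0,T]`, `|λ| ‖A(t) R ι (A(t)⁻¹ - A(s)⁻¹)‖ ≤ M C K |t-s|^μ`, i.e. (AT1) implies the
Acquistapace–Terreni condition (AT2) with `ν = 1` and `L = M C K`. -/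
theorem stmt8 {E₀ E₁ : Type*} [NormedAddCommGroup E₀] [NormedSpace ℂ E₀] [CompleteSpace E₀]
    [NormedAddCommGroup E₁] [NormedSpace ℂ E₁] [CompleteSpace E₁]
    (ι : E₁ →L[ℂ] E₀) (hι : Function.Injective ι)
    (T μ C K M : ℝ) (hT : 0 < T) (hμ0 : 0 < μ) (hμ1 : μ ≤ 1)
    (hC : 0 ≤ C) (hK : 0 ≤ K) (hM : 0 ≤ M)
    (A : ℝ → E₁ →L[ℂ] E₀) (B : ℝ → E₀ →L[ℂ] E₁)
    (hAB : ∀ t ∈ Icc (0:ℝ) T, (A t).comp (B t) = ContinuousLinearMap.id ℂ E₀)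
    (hBA : ∀ t ∈ Icc (0:ℝ) T, (B t).comp (A t) = ContinuousLinearMap.id ℂ E₁)
    (hBbd : ∀ t ∈ Icc (0:ℝ) T, ‖B t‖ ≤ K)
    (hHol : ∀ s ∈ Icc (0:ℝ) T, ∀ t ∈ Icc (0:ℝ) T, ‖A t - A s‖ ≤ C * |t - s| ^ μ)
    (lam : ℂ) (t : ℝ) (ht : t ∈ Icc (0:ℝ) T)
    (R : E₀ →L[ℂ] E₁)
    (hR1 : (lam • ι - A t).comp R = ContinuousLinearMap.id ℂ E₀)
    (hR2 : R.comp (lam • ι - A t) = ContinuousLinearMap.id ℂ E₁)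
    (hRbd : ‖ι.comp R‖ ≤ M / (‖lam‖ + 1)) :
    ∀ s ∈ Icc (0:ℝ) T,
      ‖lam‖ * ‖(A t).comp (R.comp (ι.comp (B t - B s)))‖ ≤ M * C * K * |t - s| ^ μ := by

  intro s hs
  -- pointwise identities
  have hABt : ∀ y, A t (B t y) = y := fun y => DFunLike.congr_fun (hAB t ht) y
  have hABs : ∀ y, A s (B s y) = y := fun y => DFunLike.congr_fun (hAB s hs) y
  have hBAt : ∀ v, B t (A t v) = v := fun v => DFunLike.congr_fun (hBA t ht) v
  have hR1' : ∀ y, A t (R y) = lam • ι (R y) - y := by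
    intro y
    have := DFunLike.congr_fun hR1 y
    simp only [ContinuousLinearMap.comp_apply, ContinuousLinearMap.sub_apply,
      ContinuousLinearMap.smul_apply, ContinuousLinearMap.id_apply] at this
    linear_combination (norm := abel) -this
  have hR2' : ∀ v, R (A t v) = lam • R (ι v) - v := by
    intro v
    have := DFunLike.congr_fun hR2 v
    simp only [ContinuousLinearMap.comp_apply, ContinuousLinearMap.sub_apply,
      ContinuousLinearMap.smul_apply, ContinuousLinearMap.id_apply, map_sub, map_smul] at this
    linear_combination (norm := abel) -this
  -- key operator identity
  have key : (A t).comp (R.comp (ι.comp (B t - B s)))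
      = (ι.comp R).comp ((A s - A t).comp (B s)) := by
    ext x
    simp only [ContinuousLinearMap.comp_apply, ContinuousLinearMap.sub_apply]
    have e1 : B t x - B s x = B t (A s (B s x) - A t (B s x)) := by
      rw [map_sub, hABs, hBAt]
    rw [e1]
    set z := A s (B s x) - A t (B s x) with hz
    have e2 : A t (R (ι (B t z))) = ι (R z) := by
      rw [hR1']
      conv_rhs => rw [← hABt z, hR2']
      simp [map_sub, map_smul]
    exact e2
  rw [key]
  -- norm estimates
  have h1 : ‖A s - A t‖ ≤ C * |t - s| ^ μ := by
    have := hHol t ht s hs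
    rwa [abs_sub_comm] at this
  have hBs : ‖B s‖ ≤ K := hBbd s hs
  have hbound : ‖(ι.comp R).comp ((A s - A t).comp (B s))‖
      ≤ (M / (‖lam‖ + 1)) * ((C * |t - s| ^ μ) * K) := by
    calc ‖(ι.comp R).comp ((A s - A t).comp (B s))‖
        ≤ ‖ι.comp R‖ * ‖(A s - A t).comp (B s)‖ := ContinuousLinearMap.opNorm_comp_le _ _
      _ ≤ ‖ι.comp R‖ * (‖A s - A t‖ * ‖B s‖) := by
          gcongr
          exact ContinuousLinearMap.opNorm_comp_le _ _
      _ ≤ (M / (‖lam‖ + 1)) * ((C * |t - s| ^ μ) * K) := by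
          gcongr <;> first | exact (norm_nonneg _).trans hRbd | assumption
  have hlam : ‖lam‖ * (M / (‖lam‖ + 1)) ≤ M := by
    have h0 : (0:ℝ) < ‖lam‖ + 1 := by positivity
    rw [mul_div_assoc', div_le_iff₀ h0]
    nlinarith [norm_nonneg lam]
  calc ‖lam‖ * ‖(ι.comp R).comp ((A s - A t).comp (B s))‖
      ≤ ‖lam‖ * ((M / (‖lam‖ + 1)) * ((C * |t - s| ^ μ) * K)) := by
        gcongr
    _ = (‖lam‖ * (M / (‖lam‖ + 1))) * ((C * |t - s| ^ μ) * K) := by ring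
    _ ≤ M * ((C * |t - s| ^ μ) * K) := by
        gcongr
    _ = M * C * K * |t - s| ^ μ := by ring
end
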